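/- arXiv:1504.01062 — 6 statements merged into one kernel-verified Lean document; each statement's English description precedes it below -/
import Mathlib

section
/- Let n ≥ 1, let F be a cdf which is continuous on ℝ, and let U, V : ℝ → ℝ and U_j, L_j, M_j, V_j : ℝ → EReal (j = 1,…,n) be right-continuous functions such that: (c1) U and V are non-negative; (c2) U, each U_j and each M_j are non-decreasing, and V, each V_j and each L_j are non-increasing; (c3) if lim_{x→−∞} U(x) ≠ lim_{x→−∞} V(x), then (lim_{x→−∞} U(x) = 0 or lim_{x→−∞} U_j(x) = lim_{x→−∞} L_j(x) for all j) and (lim_{x→−∞} V(x) = 0 or lim_{x→−∞} M_j(x) = lim_{x→−∞} V_j(x) for all j); (c4) if lim_{x→−∞} U(x) = lim_{x→−∞} V(x) ≠ 0, then lim_{x→−∞} U_j(x) = lim_{x→−∞} V_j(x) and lim_{x→−∞} M_j(x) = lim_{x→−∞} L_j(x) for all j; (c5) lim_{x→−∞} L_j(x) ≤ lim_{x→−∞} U_j(x) for all j, and if lim_{x→−∞} V(x) ≠ 0 then lim_{x→+∞} M_j(x) ≤ lim_{x→+∞} V_j(x) for all j; (c6) lim_{x→+∞} U_n(x) ≥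 sup{x ∈ ℝ : F(x) < 1} and lim_{x→+∞} L_1(x) ≤ inf{x ∈ ℝ : F(x) > 0}; (c7) lim_{x→+∞} U(x) = 1; (c8) lim_{x→+∞} V(x) = 0 or lim_{x→+∞} M_j(x) = lim_{x→+∞} V_j(x) for all j; (c9) lim_{x→+∞} U_j(x) = lim_{x→+∞} L_{j+1}(x) for all j = 1,…,n−1. Then H(x) = U(x)·Σ_{j=1}^n (F̄(U_j(x)) − F̄(L_j(x))) − V(x)·Σ_{j=1}^n (F̄(V_j(x)) − F̄(M_j(x))) is a cdf. -/
open Filter Topology Set BigOperators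

/-- A cumulative distribution function: non-decreasing, right-continuous,
tending to 0 at `-∞` and to 1 at `+∞`. -/
def IsCDF (F : ℝ → ℝ) : Prop :=
  Monotone F ∧ (∀ x : ℝ, ContinuousWithinAt F (Set.Ici x) x) ∧
    Tendsto F atBot (nhds 0) ∧ Tendsto F atTop (nhds 1)

/-- The extension of a cdf to the extended reals, with value 0 at `⊥` and 1 at `⊤`. -/
noncomputable def extCDF (F : ℝ → ℝ) (a : EReal) : ℝ :=
  if a = ⊥ then 0 else if a = ⊤ then 1 else F a.toReal

/-!
Write `H = U * G - V * K` with `G x = ∑ⱼ ∫_{Lⱼ x}^{Uⱼ x} dF` and `K x = ∑ⱼ ∫_{Mⱼ x}^{Vⱼ x} dF`.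
By (c5) every interval is correctly oriented, so `G ≥ 0` is non-decreasing and `K ≥ 0` is
non-increasing (unless `V(-∞) = 0`, which forces `V ≡ 0`); hence `H` is non-decreasing. Since `F`
is continuous, so is `F̄` on `EReal`, which gives right-continuity and the limits of `H`. At `-∞`
the two products cancel or vanish by (c3)-(c4). At `+∞` the second product vanishes by (c8), and
by (c9) the sum `G` telescopes to `F̄(Uₙ(+∞)) - F̄(L₁(+∞))`, which is `1 - 0` by (c6).
-/

@[simp] lemma extCDF_bot (F : ℝ → ℝ) : extCDF F ⊥ = 0 := by simp [extCDF]

@[simp] lemma extCDF_top (F : ℝ → ℝ) : extCDF F ⊤ = 1 := by simp [extCDF]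

@[simp] lemma extCDF_coe (F : ℝ → ℝ) (x : ℝ) : extCDF F x = F x := by simp [extCDF]

lemma Fin.sum_sub_eq_of_castSucc_eq_succ {M : Type*} [AddCommGroup M] {m : ℕ}
    (b c : Fin (m + 1) → M) (h : ∀ j : Fin m, b j.castSucc = c j.succ) :
    ∑ j, (b j - c j) = b (Fin.last m) - c 0 := by
  rw [Finset.sum_sub_distrib, Fin.sum_univ_castSucc, Fin.sum_univ_succ,
    Finset.sum_congr rfl fun j _ => h j]
  abel

section

variable {F : ℝ → ℝ}

namespace IsCDF

lemma nonneg (hF : IsCDF F) (x : ℝ) : 0 ≤ F x := hF.1.le_of_tendsto hF.2.2.1 x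

lemma le_one (hF : IsCDF F) (x : ℝ) : F x ≤ 1 := hF.1.ge_of_tendsto hF.2.2.2 x

lemma monotone_extCDF (hF : IsCDF F) : Monotone (extCDF F) := by
  intro a b hab
  induction a using EReal.rec <;> induction b using EReal.rec <;>
    simp_all [hF.nonneg, hF.le_one]
  exact hF.1 hab

lemma continuous_extCDF (hF : IsCDF F) (hFc : Continuous F) : Continuous (extCDF F) := by
  refine continuous_iff_continuousAt.2 fun a => ?_
  induction a using EReal.rec with
  | bot =>
    rw [← continuousWithinAt_compl_self, ContinuousWithinAt, EReal.nhdsWithin_bot,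
      tendsto_map'_iff]
    simpa [Function.comp_def] using hF.2.2.1
  | coe x =>
    rw [ContinuousAt, EReal.nhds_coe, tendsto_map'_iff]
    simpa [Function.comp_def] using hFc.tendsto x
  | top =>
    rw [← continuousWithinAt_compl_self, ContinuousWithinAt, EReal.nhdsWithin_top,
      tendsto_map'_iff]
    simpa [Function.comp_def] using hF.2.2.2

lemma extCDF_eq_one (hF : IsCDF F) (hFc : Continuous F) {a : EReal}
    (ha : sSup ((↑) '' {x | F x < 1}) ≤ a) : extCDF F a = 1 := by
  rcases eq_or_ne a ⊤ with rfl | hne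
  · exact extCDF_top F
  have hIoi : Ioi a ⊆ extCDF F ⁻¹' {1} := by
    intro b hb
    induction b using EReal.rec with
    | bot => simp at hb
    | coe r =>
      by_contra hr
      have hlt : r ∈ {x | F x < 1} := (hF.le_one r).lt_of_ne (by simpa using hr)
      have hra : (r : EReal) ≤ a := (le_sSup (mem_image_of_mem _ hlt)).trans ha
      exact hra.not_gt hb
    | top => simp
  have hmem : a ∈ closure (Ioi a) := by
    rw [closure_Ioi' ⟨⊤, hne.lt_top⟩]
    exact self_mem_Ici
  exact (isClosed_singleton.preimage (hF.continuous_extCDF hFc)).closure_subset_iff.2 hIoi hmem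

lemma extCDF_eq_zero (hF : IsCDF F) (hFc : Continuous F) {a : EReal}
    (ha : a ≤ sInf ((↑) '' {x | 0 < F x})) : extCDF F a = 0 := by
  rcases eq_or_ne a ⊥ with rfl | hne
  · exact extCDF_bot F
  have hIio : Iio a ⊆ extCDF F ⁻¹' {0} := by
    intro b hb
    induction b using EReal.rec with
    | bot => simp
    | coe r =>
      by_contra hr
      have hpos : r ∈ {x | 0 < F x} := (hF.nonneg r).lt_of_ne (by simpa [eq_comm] using hr)
      have har : a ≤ r := ha.trans (sInf_le (mem_image_of_mem _ hpos))
      exact har.not_gt hb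
    | top => simp at hb
  have hmem : a ∈ closure (Iio a) := by
    rw [closure_Iio' ⟨⊥, hne.bot_lt⟩]
    exact self_mem_Iic
  exact (isClosed_singleton.preimage (hF.continuous_extCDF hFc)).closure_subset_iff.2 hIio hmem

end IsCDF

section intervalMass

variable {ι : Type*} [Fintype ι]

/-- `∑ⱼ ∫_{l j}^{u j} dF` -/
noncomputable def intervalMass (F : ℝ → ℝ) (u l : ι → EReal) : ℝ :=
  ∑ j, (extCDF F (u j) - extCDF F (l j))

lemma intervalMass_nonneg (hF : Monotone (extCDF F)) {u l : ι → EReal}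
    (h : ∀ j, l j ≤ u j) : 0 ≤ intervalMass F u l :=
  Finset.sum_nonneg fun j _ => sub_nonneg.2 (hF (h j))

lemma intervalMass_mono (hF : Monotone (extCDF F)) {u l u' l' : ι → EReal}
    (hu : ∀ j, u j ≤ u' j) (hl : ∀ j, l' j ≤ l j) : intervalMass F u l ≤ intervalMass F u' l' :=
  Finset.sum_le_sum fun j _ => sub_le_sub (hF (hu j)) (hF (hl j))

lemma monotone_mul_intervalMass (hF : Monotone (extCDF F)) {α : Type*} [Preorder α]
    {c : α → ℝ} {u l : ι → α → EReal} (hc : Monotone c) (hc₀ : ∀ x, 0 ≤ c x)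
    (hu : ∀ j, Monotone (u j)) (hl : ∀ j, Antitone (l j)) (hlu : ∀ x j, l j x ≤ u j x) :
    Monotone fun x => c x * intervalMass F (u · x) (l · x) := fun x y hxy =>
  mul_le_mul (hc hxy) (intervalMass_mono hF (fun j => hu j hxy) (fun j => hl j hxy))
    (intervalMass_nonneg hF (hlu x)) (hc₀ y)

lemma antitone_mul_intervalMass (hF : Monotone (extCDF F)) {α : Type*} [Preorder α]
    {c : α → ℝ} {u l : ι → α → EReal} (hc : Antitone c) (hc₀ : ∀ x, 0 ≤ c x)
    (hu : ∀ j, Antitone (u j)) (hl : ∀ j, Monotone (l j)) (hlu : ∀ x j, l j x ≤ u j x) :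
    Antitone fun x => c x * intervalMass F (u · x) (l · x) := fun _ _ hxy =>
  monotone_mul_intervalMass (α := αᵒᵈ) hF hc.dual_left hc₀ (fun j => (hu j).dual_left)
    (fun j => (hl j).dual_left) hlu hxy

lemma mul_intervalMass_eq_zero {c : ℝ} {u l : ι → EReal} (h : c = 0 ∨ ∀ j, u j = l j) :
    c * intervalMass F u l = 0 := by
  rcases h with rfl | h
  · exact zero_mul _
  · simp [intervalMass, h]

lemma intervalMass_of_chain {m : ℕ} (u l : Fin (m + 1) → EReal)
    (h : ∀ j : Fin m, u j.castSucc = l j.succ) :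
    intervalMass F u l = extCDF F (u (Fin.last m)) - extCDF F (l 0) :=
  Fin.sum_sub_eq_of_castSucc_eq_succ _ _ fun j => congrArg (extCDF F) (h j)

lemma tendsto_intervalMass (hF : Continuous (extCDF F)) {α : Type*} {f : Filter α}
    {u l : ι → α → EReal} {a b : ι → EReal} (hu : ∀ j, Tendsto (u j) f (𝓝 (a j)))
    (hl : ∀ j, Tendsto (l j) f (𝓝 (b j))) :
    Tendsto (fun x => intervalMass F (u · x) (l · x)) f (𝓝 (intervalMass F a b)) :=
  tendsto_finsetSum _ fun j _ =>
    (hF.continuousAt.tendsto.comp (hu j)).sub (hF.continuousAt.tendsto.comp (hl j))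

end intervalMass

end

/-- Theorem 1: the method to generate distributions and classes of probability
distributions. -/
theorem stmt_0
    (n : ℕ) (hn : 1 ≤ n)
    (F : ℝ → ℝ) (hF : IsCDF F) (hFc : Continuous F)
    (U V : ℝ → ℝ) (Uj Lj Mj Vj : Fin n → ℝ → EReal)
    (hUrc : ∀ x : ℝ, ContinuousWithinAt U (Set.Ici x) x)
    (hVrc : ∀ x : ℝ, ContinuousWithinAt V (Set.Ici x) x)
    (hUjrc : ∀ j, ∀ x : ℝ, ContinuousWithinAt (Uj j) (Set.Ici x) x)
    (hLjrc : ∀ j, ∀ x : ℝ, ContinuousWithinAt (Lj j) (Set.Ici x) x)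
    (hMjrc : ∀ j, ∀ x : ℝ, ContinuousWithinAt (Mj j) (Set.Ici x) x)
    (hVjrc : ∀ j, ∀ x : ℝ, ContinuousWithinAt (Vj j) (Set.Ici x) x)
    (c1U : ∀ x, 0 ≤ U x) (c1V : ∀ x, 0 ≤ V x)
    (c2U : Monotone U) (c2Uj : ∀ j, Monotone (Uj j)) (c2Mj : ∀ j, Monotone (Mj j))
    (c2V : Antitone V) (c2Vj : ∀ j, Antitone (Vj j)) (c2Lj : ∀ j, Antitone (Lj j))
    -- the limits at `-∞` and `+∞` of all the monotone functions involved
    (uBot vBot uTop vTop : ℝ)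
    (UjBot LjBot MjBot VjBot UjTop LjTop MjTop VjTop : Fin n → EReal)
    (hU_bot : Tendsto U atBot (nhds uBot)) (hV_bot : Tendsto V atBot (nhds vBot))
    (hU_top : Tendsto U atTop (nhds uTop)) (hV_top : Tendsto V atTop (nhds vTop))
    (hUj_bot : ∀ j, Tendsto (Uj j) atBot (nhds (UjBot j)))
    (hLj_bot : ∀ j, Tendsto (Lj j) atBot (nhds (LjBot j)))
    (hMj_bot : ∀ j, Tendsto (Mj j) atBot (nhds (MjBot j)))
    (hVj_bot : ∀ j, Tendsto (Vj j) atBot (nhds (VjBot j)))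
    (hUj_top : ∀ j, Tendsto (Uj j) atTop (nhds (UjTop j)))
    (hLj_top : ∀ j, Tendsto (Lj j) atTop (nhds (LjTop j)))
    (hMj_top : ∀ j, Tendsto (Mj j) atTop (nhds (MjTop j)))
    (hVj_top : ∀ j, Tendsto (Vj j) atTop (nhds (VjTop j)))
    (c3 : uBot ≠ vBot →
      (uBot = 0 ∨ ∀ j, UjBot j = LjBot j) ∧ (vBot = 0 ∨ ∀ j, MjBot j = VjBot j))
    (c4 : uBot = vBot → uBot ≠ 0 →
      ∀ j, UjBot j = VjBot j ∧ MjBot j = LjBot j)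
    (c5a : ∀ j, LjBot j ≤ UjBot j)
    (c5b : vBot ≠ 0 → ∀ j, MjTop j ≤ VjTop j)
    (c6a : sSup ((fun x : ℝ => (x : EReal)) '' {x | F x < 1}) ≤ UjTop ⟨n - 1, by omega⟩)
    (c6b : LjTop ⟨0, by omega⟩ ≤ sInf ((fun x : ℝ => (x : EReal)) '' {x | 0 < F x}))
    (c7 : uTop = 1)
    (c8 : vTop = 0 ∨ ∀ j, MjTop j = VjTop j)
    (c9 : ∀ j : Fin n, ∀ h : (j : ℕ) + 1 < n, UjTop j = LjTop ⟨(j : ℕ) + 1, h⟩) :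
    IsCDF (fun x =>
      U x * ∑ j, (extCDF F (Uj j x) - extCDF F (Lj j x))
        - V x * ∑ j, (extCDF F (Vj j x) - extCDF F (Mj j x))) := by
  obtain ⟨m, rfl⟩ := Nat.exists_eq_add_of_le' hn
  have hmono := hF.monotone_extCDF
  have hcont := hF.continuous_extCDF hFc
  have hUG : Monotone fun x => U x * intervalMass F (Uj · x) (Lj · x) :=
    monotone_mul_intervalMass hmono c2U c1U c2Uj c2Lj fun x j =>
      ((c2Lj j).ge_of_tendsto (hLj_bot j) x).trans <|
        (c5a j).trans <| (c2Uj j).le_of_tendsto (hUj_bot j) x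
  have hVK : Antitone fun x => V x * intervalMass F (Vj · x) (Mj · x) := by
    rcases eq_or_ne vBot 0 with hv | hv
    · have hV : ∀ x, V x = 0 := fun x => (hv ▸ c2V.ge_of_tendsto hV_bot x).antisymm (c1V x)
      simpa only [hV, zero_mul] using antitone_const
    refine antitone_mul_intervalMass hmono c2V c1V c2Vj c2Mj fun x j => ?_
    exact ((c2Mj j).ge_of_tendsto (hMj_top j) x).trans <|
      (c5b hv j).trans <| (c2Vj j).le_of_tendsto (hVj_top j) x
  have hbot : uBot * intervalMass F UjBot LjBot - vBot * intervalMass F VjBot MjBot = 0 := by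
    by_cases huv : uBot = vBot
    · rcases eq_or_ne uBot 0 with hu | hu
      · simp [← huv, hu]
      · simp [huv, intervalMass, c4 huv hu]
    · obtain ⟨hU, hV⟩ := c3 huv
      rw [mul_intervalMass_eq_zero hU,
        mul_intervalMass_eq_zero (hV.imp_right fun h j => (h j).symm), sub_zero]
  have htop : uTop * intervalMass F UjTop LjTop - vTop * intervalMass F VjTop MjTop = 1 := by
    rw [intervalMass_of_chain _ _ fun j => c9 j.castSucc (Nat.succ_lt_succ j.2),
      show extCDF F (UjTop (Fin.last m)) = 1 from hF.extCDF_eq_one hFc c6a,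
      show extCDF F (LjTop 0) = 0 from hF.extCDF_eq_zero hFc c6b,
      mul_intervalMass_eq_zero (c8.imp_right fun h j => (h j).symm), c7]
    norm_num
  show IsCDF fun x =>
    U x * intervalMass F (Uj · x) (Lj · x) - V x * intervalMass F (Vj · x) (Mj · x)
  refine ⟨fun x y hxy => sub_le_sub (hUG hxy) (hVK hxy), fun x => ?_, ?_, ?_⟩
  · exact ((hUrc x).mul (tendsto_intervalMass hcont (hUjrc · x) (hLjrc · x))).sub
      ((hVrc x).mul (tendsto_intervalMass hcont (hVjrc · x) (hMjrc · x)))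
  · simpa only [hbot] using (hU_bot.mul (tendsto_intervalMass hcont hUj_bot hLj_bot)).sub
      (hV_bot.mul (tendsto_intervalMass hcont hVj_bot hMj_bot))
  · simpa only [htop] using (hU_top.mul (tendsto_intervalMass hcont hUj_top hLj_top)).sub
      (hV_top.mul (tendsto_intervalMass hcont hVj_top hMj_top))
end

section
/- Let k ≥ 1, let G_1,…,G_m be cdfs, and let u_i, v_i : [0,1]^m → [0,1] (i = 1,…,k) be continuous functions with u_i non-decreasing and v_i non-increasing in each variable, u_i(0,…,0) = 0, u_i(1,…,1) = 1, v_i(0,…,0) = 1 and v_i(1,…,1) = 0. Let α_i > 0 and 0 ≤ θ_i ≤ 1 for each i. Then the function H(x) = ∏_{i=1}^k ((1−θ_i)·u_i(G_1(x),…,G_m(x)) + θ_i)^{α_i} − ∏_{i=1}^k (θ_i·v_i(G_1(x),…,G_m(x)))^{α_i} is a cdf. -/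
open Filter Topology Set BigOperators unitInterval

/-- Sub-case 22S1C1.2: `H(x) = ∏ᵢ ((1-θᵢ)uᵢ(G₁(x),…,G_m(x)) + θᵢ)^{αᵢ}
− ∏ᵢ (θᵢ vᵢ(G₁(x),…,G_m(x)))^{αᵢ}` is a cdf (real powers, `0 ^ a = 0` for `a > 0`). -/
theorem stmt_6
    (k m : ℕ) (hk : 1 ≤ k)
    (G : Fin m → ℝ → ℝ) (hG : ∀ i, IsCDF (G i))
    (hG01 : ∀ i (x : ℝ), G i x ∈ unitInterval)
    (u v : Fin k → (Fin m → unitInterval) → ℝ)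
    (huc : ∀ i, Continuous (u i)) (hvc : ∀ i, Continuous (v i))
    (hu01 : ∀ i t, u i t ∈ unitInterval) (hv01 : ∀ i t, v i t ∈ unitInterval)
    (humono : ∀ i, Monotone (u i)) (hvanti : ∀ i, Antitone (v i))
    (hu0 : ∀ i, u i 0 = 0) (hu1 : ∀ i, u i 1 = 1)
    (hv0 : ∀ i, v i 0 = 1) (hv1 : ∀ i, v i 1 = 0)
    (α θ : Fin k → ℝ) (hα : ∀ i, 0 < α i) (hθ : ∀ i, θ i ∈ unitInterval) :
    IsCDF (fun x =>
      (∏ i, ((1 - θ i) * u i (fun i' => ⟨G i' x, hG01 i' x⟩) + θ i) ^ (α i))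
        - ∏ i, (θ i * v i (fun i' => ⟨G i' x, hG01 i' x⟩)) ^ (α i)) := by
  have hθ0 : ∀ i, 0 ≤ θ i := fun i => (hθ i).1
  have hθ1 : ∀ i, θ i ≤ 1 := fun i => (hθ i).2
  set g : ℝ → (Fin m → unitInterval) := fun x i' => ⟨G i' x, hG01 i' x⟩ with hgdef
  set P : (Fin m → unitInterval) → ℝ :=
    fun t => ∏ i, ((1 - θ i) * u i t + θ i) ^ (α i) with hPdef
  set Q : (Fin m → unitInterval) → ℝ :=
    fun t => ∏ i, (θ i * v i t) ^ (α i) with hQdef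
  have hgmono : Monotone g := fun x y hxy i' => Subtype.mk_le_mk.2 ((hG i').1 hxy)
  have hubase : ∀ i t, 0 ≤ (1 - θ i) * u i t + θ i := by
    intro i t
    have h1 := (hu01 i t).1
    nlinarith [hθ0 i, hθ1 i]
  have hvbase : ∀ i t, 0 ≤ θ i * v i t := fun i t => mul_nonneg (hθ0 i) (hv01 i t).1
  have hPmono : Monotone P := by
    intro s t hst
    apply Finset.prod_le_prod (fun i _ => Real.rpow_nonneg (hubase i s) _)
    intro i _
    apply Real.rpow_le_rpow (hubase i s) _ (hα i).le
    have := humono i hst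
    nlinarith [hθ0 i, hθ1 i]
  have hQanti : Antitone Q := by
    intro s t hst
    apply Finset.prod_le_prod (fun i _ => Real.rpow_nonneg (hvbase i t) _)
    intro i _
    apply Real.rpow_le_rpow (hvbase i t) _ (hα i).le
    exact mul_le_mul_of_nonneg_left (hvanti i hst) (hθ0 i)
  have hPcont : Continuous P := by
    apply continuous_finset_prod
    intro i _
    exact (Real.continuous_rpow_const (hα i).le).comp
      (((continuous_const.mul (huc i)).add continuous_const))
  have hQcont : Continuous Q := by
    apply continuous_finset_prod
    intro i _
    exact (Real.continuous_rpow_const (hα i).le).comp (continuous_const.mul (hvc i))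
  have hPQcont : Continuous (fun t => P t - Q t) := hPcont.sub hQcont
  have hgbot : Tendsto g atBot (nhds 0) := by
    rw [tendsto_pi_nhds]
    intro i'
    rw [tendsto_subtype_rng]
    simpa using (hG i').2.2.1
  have hgtop : Tendsto g atTop (nhds 1) := by
    rw [tendsto_pi_nhds]
    intro i'
    rw [tendsto_subtype_rng]
    simpa using (hG i').2.2.2
  have hP0 : P 0 - Q 0 = 0 := by
    simp [hPdef, hQdef, hu0, hv0]
  have hP1 : P 1 - Q 1 = 1 := by
    have : Q 1 = 0 := by
      apply Finset.prod_eq_zero (Finset.mem_univ (⟨0, hk⟩ : Fin k))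
      rw [hv1, mul_zero, Real.zero_rpow (hα _).ne']
    rw [this]
    simp [hPdef, hu1]
  refine ⟨?_, ?_, ?_, ?_⟩
  · intro x y hxy
    exact sub_le_sub (hPmono (hgmono hxy)) (hQanti (hgmono hxy))
  · intro x
    have hgc : ContinuousWithinAt g (Set.Ici x) x := by
      rw [continuousWithinAt_pi]
      intro i'
      exact tendsto_subtype_rng.2 ((hG i').2.1 x)
    exact hPQcont.continuousAt.comp_continuousWithinAt hgc
  · have := (hPQcont.tendsto 0).comp hgbot
    rw [hP0] at this
    exact this
  · have := (hPQcont.tendsto 1).comp hgtop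
    rw [hP1] at this
    exact this
end

section
/- Let k ≥ 1, let G_1,…,G_m be cdfs, and let u_i, v_i : [0,1]^m → [0,1] (i = 1,…,k) be continuous functions with u_i non-decreasing and v_i non-increasing in each variable, u_i(0,…,0) = 0, u_i(1,…,1) = 1, v_i(0,…,0) = 1 and v_i(1,…,1) = 0. Let α_i > 0 and 0 ≤ θ_i ≤ 1 for each i. Then the function H(x) = 1 − ∏_{i=1}^k ((1−θ_i)·v_i(G_1(x),…,G_m(x)) + θ_i)^{α_i} + ∏_{i=1}^k (θ_i·u_i(G_1(x),…,G_m(x)))^{α_i} is a cdf. -/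
open Filter Topology Set BigOperators unitInterval

/-- Sub-case 22S1C1.3: `H(x) = 1 − ∏ᵢ ((1-θᵢ)vᵢ(G₁(x),…,G_m(x)) + θᵢ)^{αᵢ}
+ ∏ᵢ (θᵢ uᵢ(G₁(x),…,G_m(x)))^{αᵢ}` is a cdf (real powers, `0 ^ a = 0` for `a > 0`). -/
theorem stmt_7
    (k m : ℕ) (hk : 1 ≤ k)
    (G : Fin m → ℝ → ℝ) (hG : ∀ i, IsCDF (G i))
    (hG01 : ∀ i (x : ℝ), G i x ∈ unitInterval)
    (u v : Fin k → (Fin m → unitInterval) → ℝ)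
    (huc : ∀ i, Continuous (u i)) (hvc : ∀ i, Continuous (v i))
    (hu01 : ∀ i t, u i t ∈ unitInterval) (hv01 : ∀ i t, v i t ∈ unitInterval)
    (humono : ∀ i, Monotone (u i)) (hvanti : ∀ i, Antitone (v i))
    (hu0 : ∀ i, u i 0 = 0) (hu1 : ∀ i, u i 1 = 1)
    (hv0 : ∀ i, v i 0 = 1) (hv1 : ∀ i, v i 1 = 0)
    (α θ : Fin k → ℝ) (hα : ∀ i, 0 < α i) (hθ : ∀ i, θ i ∈ unitInterval) :
    IsCDF (fun x =>
      1 - (∏ i, ((1 - θ i) * v i (fun i' => ⟨G i' x, hG01 i' x⟩) + θ i) ^ (α i))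
        + ∏ i, (θ i * u i (fun i' => ⟨G i' x, hG01 i' x⟩)) ^ (α i)) := by
  set Gx : ℝ → (Fin m → unitInterval) := fun x i' => ⟨G i' x, hG01 i' x⟩ with hGxdef
  have hvnn : ∀ i t, (0:ℝ) ≤ (1 - θ i) * v i t + θ i := by
    intro i t
    have h1 := (hθ i).1; have h2 := (hθ i).2; have h3 := (hv01 i t).1
    nlinarith
  have hunn : ∀ i t, (0:ℝ) ≤ θ i * u i t := fun i t => mul_nonneg (hθ i).1 (hu01 i t).1
  have hGxmono : Monotone Gx := by
    intro x y hxy i'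
    exact Subtype.mk_le_mk.2 ((hG i').1 hxy)
  -- key convergence lemma
  have key : ∀ (l : Filter ℝ) (c : Fin m → unitInterval),
      (∀ i', Tendsto (fun x => G i' x) l (𝓝 (c i' : ℝ))) →
      Tendsto (fun x =>
        1 - (∏ i, ((1 - θ i) * v i (Gx x) + θ i) ^ (α i))
          + ∏ i, (θ i * u i (Gx x)) ^ (α i)) l
        (𝓝 (1 - (∏ i, ((1 - θ i) * v i c + θ i) ^ (α i))
          + ∏ i, (θ i * u i c) ^ (α i))) := by
    intro l c hc
    have hGxc : Tendsto Gx l (𝓝 c) := by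
      rw [tendsto_pi_nhds]
      intro i'
      rw [tendsto_subtype_rng]
      exact hc i'
    have hP : Tendsto (fun x => ∏ i, ((1 - θ i) * v i (Gx x) + θ i) ^ (α i)) l
        (𝓝 (∏ i, ((1 - θ i) * v i c + θ i) ^ (α i))) := by
      apply tendsto_finset_prod
      intro i _
      have h1 : Tendsto (fun x => (1 - θ i) * v i (Gx x) + θ i) l
          (𝓝 ((1 - θ i) * v i c + θ i)) :=
        (tendsto_const_nhds.mul (((hvc i).tendsto c).comp hGxc)).add tendsto_const_nhds
      exact (Real.continuousAt_rpow_const _ (α i) (Or.inr (hα i).le)).tendsto.comp h1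
    have hQ : Tendsto (fun x => ∏ i, (θ i * u i (Gx x)) ^ (α i)) l
        (𝓝 (∏ i, (θ i * u i c) ^ (α i))) := by
      apply tendsto_finset_prod
      intro i _
      have h1 : Tendsto (fun x => θ i * u i (Gx x)) l (𝓝 (θ i * u i c)) :=
        tendsto_const_nhds.mul (((huc i).tendsto c).comp hGxc)
      exact (Real.continuousAt_rpow_const _ (α i) (Or.inr (hα i).le)).tendsto.comp h1
    exact (tendsto_const_nhds.sub hP).add hQ
  refine ⟨?_, ?_, ?_, ?_⟩
  · -- Monotone
    intro x y hxy
    have hP : (∏ i, ((1 - θ i) * v i (Gx y) + θ i) ^ (α i))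
        ≤ ∏ i, ((1 - θ i) * v i (Gx x) + θ i) ^ (α i) := by
      apply Finset.prod_le_prod
      · intro i _; exact Real.rpow_nonneg (hvnn i _) _
      · intro i _
        apply Real.rpow_le_rpow (hvnn i _) _ (hα i).le
        have := hvanti i (hGxmono hxy)
        have h1 : (0:ℝ) ≤ 1 - θ i := by linarith [(hθ i).2]
        nlinarith
    have hQ : (∏ i, (θ i * u i (Gx x)) ^ (α i))
        ≤ ∏ i, (θ i * u i (Gx y)) ^ (α i) := by
      apply Finset.prod_le_prod
      · intro i _; exact Real.rpow_nonneg (hunn i _) _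
      · intro i _
        apply Real.rpow_le_rpow (hunn i _) _ (hα i).le
        exact mul_le_mul_of_nonneg_left (humono i (hGxmono hxy)) (hθ i).1
    simp only
    linarith
  · -- right continuity
    intro x
    exact key (𝓝[Set.Ici x] x) (Gx x) (fun i' => (hG i').2.1 x)
  · -- atBot
    have h0 : ∀ i', Tendsto (fun x => G i' x) atBot (𝓝 (((0 : Fin m → unitInterval) i' : ℝ))) := by
      intro i'
      simpa using (hG i').2.2.1
    have := key atBot 0 h0
    have hval : (1 - (∏ i, ((1 - θ i) * v i 0 + θ i) ^ (α i))
        + ∏ i, (θ i * u i 0) ^ (α i)) = 0 := by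
      have h1 : (∏ i, ((1 - θ i) * v i 0 + θ i) ^ (α i)) = 1 := by
        apply Finset.prod_eq_one
        intro i _
        rw [hv0]
        norm_num
      have h2 : (∏ i, (θ i * u i 0) ^ (α i)) = 0 := by
        apply Finset.prod_eq_zero (Finset.mem_univ (⟨0, hk⟩ : Fin k))
        rw [hu0, mul_zero]
        exact Real.zero_rpow (hα _).ne'
      rw [h1, h2]; ring
    rwa [hval] at this
  · -- atTop
    have h1 : ∀ i', Tendsto (fun x => G i' x) atTop (𝓝 (((1 : Fin m → unitInterval) i' : ℝ))) := by
      intro i'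
      simpa using (hG i').2.2.2
    have := key atTop 1 h1
    have hval : (1 - (∏ i, ((1 - θ i) * v i 1 + θ i) ^ (α i))
        + ∏ i, (θ i * u i 1) ^ (α i)) = 1 := by
      have h2 : ∀ i : Fin k, ((1 - θ i) * v i 1 + θ i) = θ i * u i 1 := by
        intro i; rw [hv1, hu1]; ring
      rw [Finset.prod_congr rfl (fun i _ => by rw [h2 i])]
      ring
    rwa [hval] at this
end

section
/- Let n ≥ 1, let F and G_1,…,G_m be cdfs, let 𝒰, ϑ : [0,1]^m → ℝ and μ_j, ℓ_j, m_j, ν_j : [0,1]^m → EReal (j = 1,…,n) be arbitrary functions, and define H(x) = 𝒰(·)(x)·Σ_{j=1}^n (F̄(μ_j(·)(x)) − F̄(ℓ_j(·)(x))) − ϑ(·)(x)·Σ_{j=1}^n (F̄(ν_j(·)(x)) − F̄(m_j(·)(x))), where (·)(x) = (G_1(x),…,G_m(x)). If the support S_{G_j} is countable for every j = 1,…,m, then the support S_H is countable. -/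
open Filter Topology Set BigOperators unitInterval

/-- The support of a function `F : ℝ → ℝ`:
`S_F = {x | F(x) − F(x − ε) > 0 for every ε > 0}`. -/
def cdfSupport (F : ℝ → ℝ) : Set ℝ :=
  {x | ∀ ε > (0 : ℝ), 0 < F x - F (x - ε)}

/-!
Off the supports of the `G_i`, every `G_i` is constant on some interval `[x - ε, x]`; since `H`
depends on `x` only through `(G_1(x), …, G_m(x))`, so is `H`, and `x ∉ S_H`. Hence `S_H` lies in
the finite union of the countable sets `S_{G_i}`.
-/

theorem Monotone.eventually_eq_sub_of_notMem_cdfSupport {G : ℝ → ℝ} (hG : Monotone G) {x : ℝ}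
    (hx : x ∉ cdfSupport G) : ∀ᶠ δ in 𝓝[>] 0, G (x - δ) = G x := by
  simp only [cdfSupport, mem_ofPred_eq, not_forall, not_lt] at hx
  obtain ⟨ε, hε, hGε⟩ := hx
  filter_upwards [Ioc_mem_nhdsGT hε] with δ ⟨hδ, hδε⟩
  exact le_antisymm (hG (by linarith))
    (by linarith [hG (show x - ε ≤ x - δ by linarith)])

theorem cdfSupport_subset_iUnion_of_factors {ι : Type*} [Finite ι] {G : ι → ℝ → ℝ}
    (hG : ∀ i, Monotone (G i)) {H : ℝ → ℝ} (hH : ∀ x y, (∀ i, G i x = G i y) → H x = H y) :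
    cdfSupport H ⊆ ⋃ i, cdfSupport (G i) := by
  intro x hx
  by_contra hxG
  simp only [mem_iUnion, not_exists] at hxG
  have hconst : ∀ᶠ δ in 𝓝[>] 0, 0 < δ ∧ ∀ i, G i (x - δ) = G i x :=
    eventually_mem_nhdsWithin.and <|
      eventually_all.2 fun i => (hG i).eventually_eq_sub_of_notMem_cdfSupport (hxG i)
  obtain ⟨δ, hδ, hGδ⟩ := hconst.exists
  have := hx δ hδ
  rw [hH _ _ hGδ, sub_self] at this
  exact this.false

theorem stmt_10_general
    (n m : ℕ)
    (F : ℝ → ℝ)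
    (G : Fin m → ℝ → ℝ) (hG : ∀ i, IsCDF (G i))
    (hG01 : ∀ i (x : ℝ), G i x ∈ unitInterval)
    (𝒰 ϑ : (Fin m → unitInterval) → ℝ)
    (μ ℓ mm ν : Fin n → (Fin m → unitInterval) → EReal)
    (hGc : ∀ i, (cdfSupport (G i)).Countable) :
    (cdfSupport (fun x =>
      𝒰 (fun i => ⟨G i x, hG01 i x⟩) *
          ∑ j, (extCDF F (μ j (fun i => ⟨G i x, hG01 i x⟩))
            - extCDF F (ℓ j (fun i => ⟨G i x, hG01 i x⟩)))
        - ϑ (fun i => ⟨G i x, hG01 i x⟩) *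
          ∑ j, (extCDF F (ν j (fun i => ⟨G i x, hG01 i x⟩))
            - extCDF F (mm j (fun i => ⟨G i x, hG01 i x⟩))))
      ).Countable := by
  refine (countable_iUnion hGc).mono (cdfSupport_subset_iUnion_of_factors (fun i => (hG i).1) ?_)
  intro x y hxy
  have hargs : (fun i => (⟨G i x, hG01 i x⟩ : unitInterval)) = fun i => ⟨G i y, hG01 i y⟩ :=
    funext fun i => Subtype.ext (hxy i)
  simp only [hargs]

/-- Corollary 3.1: discrete baselines generate discrete distributions: if every
`S_{G_j}` is countable then `S_H` is countable. -/
theorem stmt_10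
    (n m : ℕ) (hn : 1 ≤ n)
    (F : ℝ → ℝ) (hF : IsCDF F)
    (G : Fin m → ℝ → ℝ) (hG : ∀ i, IsCDF (G i))
    (hG01 : ∀ i (x : ℝ), G i x ∈ unitInterval)
    (𝒰 ϑ : (Fin m → unitInterval) → ℝ)
    (μ ℓ mm ν : Fin n → (Fin m → unitInterval) → EReal)
    (hGc : ∀ i, (cdfSupport (G i)).Countable) :
    (cdfSupport (fun x =>
      𝒰 (fun i => ⟨G i x, hG01 i x⟩) *
          ∑ j, (extCDF F (μ j (fun i => ⟨G i x, hG01 i x⟩))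
            - extCDF F (ℓ j (fun i => ⟨G i x, hG01 i x⟩)))
        - ϑ (fun i => ⟨G i x, hG01 i x⟩) *
          ∑ j, (extCDF F (ν j (fun i => ⟨G i x, hG01 i x⟩))
            - extCDF F (mm j (fun i => ⟨G i x, hG01 i x⟩))))
      ).Countable :=
  stmt_10_general n m F G hG hG01 𝒰 ϑ μ ℓ mm ν hGc
end

section
/- Let n ≥ 1, let F be a cdf, and let U, V : ℝ → ℝ and U_j, L_j, M_j, V_j : ℝ → EReal (j = 1,…,n) be functions such that: U and V are non-negative; U, each U_j and each M_j are non-decreasing, and V, each V_j and each L_j are non-increasing; lim_{x→−∞} L_j(x) ≤ lim_{x→−∞} U_j(x) for all j; and if lim_{x→−∞} V(x) ≠ 0 then lim_{x→+∞} M_j(x) ≤ lim_{x→+∞} V_j(x) for all j. Then the function H(x) = U(x)·Σ_{j=1}^n (F̄(U_j(x)) − F̄(L_j(x))) − V(x)·Σ_{j=1}^n (F̄(V_j(x)) − F̄(M_j(x))) is non-decreasing on ℝ. -/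
open Filter Topology Set BigOperators

lemma extCDF_mono (F : ℝ → ℝ) (hF : IsCDF F) : Monotone (extCDF F) := by
  obtain ⟨hmono, _, hbot, htop⟩ := hF
  have h0 : ∀ x, 0 ≤ F x := fun x =>
    le_of_tendsto hbot (eventually_atBot.2 ⟨x, fun y hy => hmono hy⟩)
  have h1 : ∀ x, F x ≤ 1 := fun x =>
    ge_of_tendsto htop (eventually_atTop.2 ⟨x, fun y hy => hmono hy⟩)
  intro a b hab
  induction a using EReal.rec with
  | bot =>
    by_cases hb : b = ⊥
    · subst hb; exact le_rfl
    · by_cases ht : b = ⊤ <;> simp [extCDF, hb, ht, h0 _]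
  | coe x =>
    induction b using EReal.rec with
    | bot => exact absurd hab (by simp)
    | coe y =>
      simp only [extCDF, if_neg (EReal.coe_ne_bot _), if_neg (EReal.coe_ne_top _),
        EReal.toReal_coe]
      exact hmono (by exact_mod_cast hab)
    | top =>
      simp only [extCDF, if_neg (EReal.coe_ne_bot _), if_neg (EReal.coe_ne_top _),
        if_neg (bot_ne_top.symm : (⊤ : EReal) ≠ ⊥), if_pos rfl, EReal.toReal_coe]
      exact h1 _
  | top =>
    have : b = ⊤ := top_le_iff.1 hab
    subst this; exact le_rfl

/-- Step (iii) of the proof of Theorem 1: `H` is non-decreasing. -/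
theorem stmt_15
    (n : ℕ) (hn : 1 ≤ n)
    (F : ℝ → ℝ) (hF : IsCDF F)
    (U V : ℝ → ℝ) (Uj Lj Mj Vj : Fin n → ℝ → EReal)
    (c1U : ∀ x, 0 ≤ U x) (c1V : ∀ x, 0 ≤ V x)
    (c2U : Monotone U) (c2Uj : ∀ j, Monotone (Uj j)) (c2Mj : ∀ j, Monotone (Mj j))
    (c2V : Antitone V) (c2Vj : ∀ j, Antitone (Vj j)) (c2Lj : ∀ j, Antitone (Lj j))
    (vBot : ℝ) (UjBot LjBot MjTop VjTop : Fin n → EReal)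
    (hV_bot : Tendsto V atBot (nhds vBot))
    (hUj_bot : ∀ j, Tendsto (Uj j) atBot (nhds (UjBot j)))
    (hLj_bot : ∀ j, Tendsto (Lj j) atBot (nhds (LjBot j)))
    (hMj_top : ∀ j, Tendsto (Mj j) atTop (nhds (MjTop j)))
    (hVj_top : ∀ j, Tendsto (Vj j) atTop (nhds (VjTop j)))
    (c5a : ∀ j, LjBot j ≤ UjBot j)
    (c5b : vBot ≠ 0 → ∀ j, MjTop j ≤ VjTop j) :
    Monotone (fun x =>
      U x * ∑ j, (extCDF F (Uj j x) - extCDF F (Lj j x))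
        - V x * ∑ j, (extCDF F (Vj j x) - extCDF F (Mj j x))) := by
  have hG : Monotone (extCDF F) := extCDF_mono F hF
  set G := extCDF F with hGdef
  intro x y hxy
  simp only
  -- First part: U * A is monotone
  have hAterm : ∀ j (z : ℝ), 0 ≤ G (Uj j z) - G (Lj j z) := by
    intro j z
    have h1 : Lj j z ≤ LjBot j :=
      ge_of_tendsto (hLj_bot j) (eventually_atBot.2 ⟨z, fun w hw => c2Lj j hw⟩)
    have h2 : UjBot j ≤ Uj j z :=
      le_of_tendsto (hUj_bot j) (eventually_atBot.2 ⟨z, fun w hw => c2Uj j hw⟩)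
    have := hG (h1.trans ((c5a j).trans h2))
    linarith
  have hAx : 0 ≤ ∑ j, (G (Uj j x) - G (Lj j x)) :=
    Finset.sum_nonneg fun j _ => hAterm j x
  have hAmono : ∑ j, (G (Uj j x) - G (Lj j x)) ≤ ∑ j, (G (Uj j y) - G (Lj j y)) :=
    Finset.sum_le_sum fun j _ => sub_le_sub (hG (c2Uj j hxy)) (hG (c2Lj j hxy))
  have hUA : U x * ∑ j, (G (Uj j x) - G (Lj j x)) ≤ U y * ∑ j, (G (Uj j y) - G (Lj j y)) :=
    mul_le_mul (c2U hxy) hAmono hAx (c1U y)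
  -- Second part: V * B is antitone
  have hVB : V y * ∑ j, (G (Vj j y) - G (Mj j y)) ≤ V x * ∑ j, (G (Vj j x) - G (Mj j x)) := by
    by_cases hv : vBot = 0
    · have hVzero : ∀ z, V z = 0 := fun z =>
        le_antisymm (hv ▸ ge_of_tendsto hV_bot (eventually_atBot.2 ⟨z, fun w hw => c2V hw⟩))
          (c1V z)
      simp [hVzero]
    · have hBterm : ∀ j (z : ℝ), 0 ≤ G (Vj j z) - G (Mj j z) := by
        intro j z
        have h1 : Mj j z ≤ MjTop j :=
          ge_of_tendsto (hMj_top j) (eventually_atTop.2 ⟨z, fun w hw => c2Mj j hw⟩)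
        have h2 : VjTop j ≤ Vj j z :=
          le_of_tendsto (hVj_top j) (eventually_atTop.2 ⟨z, fun w hw => c2Vj j hw⟩)
        have := hG (h1.trans ((c5b hv j).trans h2))
        linarith
      have hBy : 0 ≤ ∑ j, (G (Vj j y) - G (Mj j y)) :=
        Finset.sum_nonneg fun j _ => hBterm j y
      have hBanti : ∑ j, (G (Vj j y) - G (Mj j y)) ≤ ∑ j, (G (Vj j x) - G (Mj j x)) :=
        Finset.sum_le_sum fun j _ => sub_le_sub (hG (c2Vj j hxy)) (hG (c2Mj j hxy))
      exact mul_le_mul (c2V hxy) hBanti hBy (c1V x)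
  linarith
end

section
/- Let n ≥ 1, let F be a cdf which is continuous on ℝ, and let U, V : ℝ → ℝ and U_j, L_j, M_j, V_j : ℝ → EReal (j = 1,…,n) be monotone functions (U, U_j, M_j non-decreasing; V, V_j, L_j non-increasing) with U, V non-negative, such that: if lim_{x→−∞} U(x) ≠ lim_{x→−∞} V(x), then (lim_{x→−∞} U(x) = 0 or lim_{x→−∞} U_j(x) = lim_{x→−∞} L_j(x) for all j) and (lim_{x→−∞} V(x) = 0 or lim_{x→−∞} M_j(x) = lim_{x→−∞} V_j(x) for all j); and if lim_{x→−∞} U(x) = lim_{x→−∞} V(x) ≠ 0, then lim_{x→−∞} U_j(x) = lim_{x→−∞} V_j(x) and lim_{x→−∞} M_j(x) = lim_{x→−∞} L_j(x) for all j. Then the function H(x) = U(x)·Σ_{j=1}^n (F̄(U_j(x)) − F̄(L_j(x))) − V(x)·Σ_{j=1}^n (F̄(V_j(x)) − F̄(M_j(x))) satisfies lim_{x→−∞} H(x) = 0. -/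
open Filter Topology Set BigOperators

lemma extCDF_tendsto (F : ℝ → ℝ) (hFc : Continuous F)
    (h0 : Tendsto F atBot (nhds 0)) (h1 : Tendsto F atTop (nhds 1)) (a : EReal) :
    Tendsto (extCDF F) (nhds a) (nhds (extCDF F a)) := by
  induction a using EReal.rec with
  | bot =>
    have : extCDF F ⊥ = 0 := by simp [extCDF]
    rw [this, Metric.tendsto_nhds]
    intro ε hε
    obtain ⟨M, hM⟩ := eventually_atBot.mp (Metric.tendsto_nhds.mp h0 ε hε)
    have hIio : Iio ((M : EReal)) ∈ nhds (⊥ : EReal) :=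
      EReal.mem_nhds_bot_iff.mpr ⟨M, subset_rfl⟩
    filter_upwards [hIio] with x hx
    by_cases hb : x = ⊥
    · simpa [extCDF, hb] using hε
    · have ht : x ≠ ⊤ := (hx.trans (EReal.coe_lt_top M)).ne
      lift x to ℝ using ⟨ht, hb⟩
      have hxM : x ≤ M := le_of_lt (by exact_mod_cast Set.mem_Iio.mp hx)
      simpa [extCDF] using hM x hxM
  | top =>
    have : extCDF F ⊤ = 1 := by simp [extCDF]
    rw [this, Metric.tendsto_nhds]
    intro ε hε
    obtain ⟨M, hM⟩ := eventually_atTop.mp (Metric.tendsto_nhds.mp h1 ε hε)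
    have hIoi : Ioi ((M : EReal)) ∈ nhds (⊤ : EReal) :=
      EReal.mem_nhds_top_iff.mpr ⟨M, subset_rfl⟩
    filter_upwards [hIoi] with x hx
    by_cases ht : x = ⊤
    · simpa [extCDF, ht] using hε
    · have hb : x ≠ ⊥ := ((EReal.bot_lt_coe M).trans hx).ne'
      lift x to ℝ using ⟨ht, hb⟩
      have hxM : M ≤ x := le_of_lt (by exact_mod_cast Set.mem_Ioi.mp hx)
      simpa [extCDF] using hM x hxM
  | coe r =>
    have hmain : Tendsto (fun x : EReal => F x.toReal) (nhds (r : EReal)) (nhds (F r)) := by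
      have h1' : Tendsto EReal.toReal (nhds (r : EReal)) (nhds r) := by
        simpa using EReal.tendsto_toReal (a := (r : EReal)) (by simp) (by simp)
      exact (hFc.tendsto r).comp h1'
    have heq : extCDF F (r : EReal) = F r := by simp [extCDF]
    rw [heq]
    refine hmain.congr' ?_
    filter_upwards [Ioo_mem_nhds (EReal.bot_lt_coe r) (EReal.coe_lt_top r)] with x hx
    simp [extCDF, hx.1.ne', hx.2.ne]

/-- Step (i) of the proof of Theorem 1: `lim_{x→−∞} H(x) = 0`. -/
theorem stmt_16
    (n : ℕ) (hn : 1 ≤ n)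
    (F : ℝ → ℝ) (hF : IsCDF F) (hFc : Continuous F)
    (U V : ℝ → ℝ) (Uj Lj Mj Vj : Fin n → ℝ → EReal)
    (c1U : ∀ x, 0 ≤ U x) (c1V : ∀ x, 0 ≤ V x)
    (c2U : Monotone U) (c2Uj : ∀ j, Monotone (Uj j)) (c2Mj : ∀ j, Monotone (Mj j))
    (c2V : Antitone V) (c2Vj : ∀ j, Antitone (Vj j)) (c2Lj : ∀ j, Antitone (Lj j))
    (uBot vBot : ℝ) (UjBot LjBot MjBot VjBot : Fin n → EReal)
    (hU_bot : Tendsto U atBot (nhds uBot)) (hV_bot : Tendsto V atBot (nhds vBot))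
    (hUj_bot : ∀ j, Tendsto (Uj j) atBot (nhds (UjBot j)))
    (hLj_bot : ∀ j, Tendsto (Lj j) atBot (nhds (LjBot j)))
    (hMj_bot : ∀ j, Tendsto (Mj j) atBot (nhds (MjBot j)))
    (hVj_bot : ∀ j, Tendsto (Vj j) atBot (nhds (VjBot j)))
    (c3 : uBot ≠ vBot →
      (uBot = 0 ∨ ∀ j, UjBot j = LjBot j) ∧ (vBot = 0 ∨ ∀ j, MjBot j = VjBot j))
    (c4 : uBot = vBot → uBot ≠ 0 →
      ∀ j, UjBot j = VjBot j ∧ MjBot j = LjBot j) :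
    Tendsto (fun x =>
      U x * ∑ j, (extCDF F (Uj j x) - extCDF F (Lj j x))
        - V x * ∑ j, (extCDF F (Vj j x) - extCDF F (Mj j x)))
      atBot (nhds 0) := by
  obtain ⟨_, _, h0, h1⟩ := hF
  set G := extCDF F with hG
  have key : ∀ (g : ℝ → EReal) (b : EReal), Tendsto g atBot (nhds b) →
      Tendsto (fun x => G (g x)) atBot (nhds (G b)) := fun g b h =>
    (extCDF_tendsto F hFc h0 h1 b).comp h
  have hlim : Tendsto (fun x =>
      U x * ∑ j, (G (Uj j x) - G (Lj j x)) - V x * ∑ j, (G (Vj j x) - G (Mj j x)))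
      atBot (nhds (uBot * ∑ j, (G (UjBot j) - G (LjBot j))
        - vBot * ∑ j, (G (VjBot j) - G (MjBot j)))) := by
    refine Tendsto.sub (hU_bot.mul ?_) (hV_bot.mul ?_)
    · exact tendsto_finset_sum _ fun j _ =>
        (key _ _ (hUj_bot j)).sub (key _ _ (hLj_bot j))
    · exact tendsto_finset_sum _ fun j _ =>
        (key _ _ (hVj_bot j)).sub (key _ _ (hMj_bot j))
  have hzero : uBot * ∑ j, (G (UjBot j) - G (LjBot j))
      - vBot * ∑ j, (G (VjBot j) - G (MjBot j)) = 0 := by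
    by_cases h : uBot = vBot
    · by_cases hz : uBot = 0
      · rw [hz, ← h, hz]; ring
      · have hc := c4 h hz
        have hs : (∑ j, (G (UjBot j) - G (LjBot j)))
            = ∑ j, (G (VjBot j) - G (MjBot j)) := by
          refine Finset.sum_congr rfl fun j _ => ?_
          rw [(hc j).1, (hc j).2]
        rw [hs, ← h]; ring
    · obtain ⟨h1', h2'⟩ := c3 h
      have e1 : uBot * ∑ j, (G (UjBot j) - G (LjBot j)) = 0 := by
        rcases h1' with h1' | h1'
        · rw [h1']; ring
        · have : (∑ j, (G (UjBot j) - G (LjBot j))) = 0 := by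
            refine Finset.sum_eq_zero fun j _ => ?_
            rw [h1' j]; ring
          rw [this]; ring
      have e2 : vBot * ∑ j, (G (VjBot j) - G (MjBot j)) = 0 := by
        rcases h2' with h2' | h2'
        · rw [h2']; ring
        · have : (∑ j, (G (VjBot j) - G (MjBot j))) = 0 := by
            refine Finset.sum_eq_zero fun j _ => ?_
            rw [h2' j]; ring
          rw [this]; ring
      rw [e1, e2]; ring
  rwa [hzero] at hlim
end
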